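/- Let v_s ∈ ℝ and let f : ℝ → ℝ be differentiable. Define on ℝ³ \ {0} the vector field V_i(x) = v_s · f(|x|) · δ_{i1} and K_{ij} = −(∂_i V_j + ∂_j V_i)/2. Then for every x ≠ 0: tr K(x) = −(x₁/|x|) · v_s · f'(|x|), and II[K](x) = −((x₂² + x₃²)/(4|x|²)) · v_s² · f'(|x|)² ≤ 0. Hence the Eulerian energy density E = II[K]/(8πG) of the Alcubierre warp drive is everywhere nonpositive, independently of the value of the bubble speed v_s. -/

import Mathlib

open scoped BigOperators

/-- Partial derivative `∂ᵢ f` on `ℝ³ = Fin 3 → ℝ`. -/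
noncomputable def pd (i : Fin 3) (f : (Fin 3 → ℝ) → ℝ) (x : Fin 3 → ℝ) : ℝ :=
  fderiv ℝ f x (Pi.single i 1)

/-- Euclidean norm on `ℝ³`. -/
noncomputable def enorm3 (x : Fin 3 → ℝ) : ℝ := Real.sqrt (∑ i, x i ^ 2)

/-- Extrinsic curvature `K_{ij} = -(∂ᵢVⱼ + ∂ⱼVᵢ)/2` of the R-Warp model with shift `-V`. -/
noncomputable def Kmat (V : Fin 3 → (Fin 3 → ℝ) → ℝ) (x : Fin 3 → ℝ) (i j : Fin 3) : ℝ :=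
  -(pd i (V j) x + pd j (V i) x) / 2

/-- Second principal invariant `II[B] = ((tr B)² - tr(B²))/2` of a 3×3 array. -/
noncomputable def II3 (B : Fin 3 → Fin 3 → ℝ) : ℝ :=
  ((∑ i, B i i) ^ 2 - ∑ i, ∑ j, B i j * B j i) / 2

/-- The Alcubierre-type shift field `Vᵢ(x) = v_s · f(|x|) · δ_{i1}`
(Lean index `0` is the first axis). -/
noncomputable def alcShift (vs : ℝ) (f : ℝ → ℝ) : Fin 3 → (Fin 3 → ℝ) → ℝ :=
  fun i x => vs * f (enorm3 x) * (if i = 0 then 1 else 0)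

/-!
Since `V = v_s f(|x|) e₁` has only one component, `∂ᵢVⱼ = uᵢ δⱼ₁` with `u = ∇(v_s f(|x|))`,
so `K = -(u ⊗ e₁ + e₁ ⊗ u)/2` is a symmetrized product of two vectors. For such a matrix
`II[a ⊗ b + b ⊗ a] = (a·b)² - |a|²|b|²`, which is `≤ 0` by Cauchy–Schwarz; with `b = e₁` and
`u = v_s f'(|x|) x/|x|` it equals `-(x₂² + x₃²) v_s² f'(|x|)² / (4|x|²)`.
-/

lemma hasFDerivAt_sum_sq {ι : Type*} [Fintype ι] (x : ι → ℝ) :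
    HasFDerivAt (fun y : ι → ℝ => ∑ i, y i ^ 2)
      (∑ i, (2 * x i) • (ContinuousLinearMap.proj i : (ι → ℝ) →L[ℝ] ℝ)) x :=
  HasFDerivAt.fun_sum fun i _ => by
    simpa using (ContinuousLinearMap.proj (R := ℝ) (φ := fun _ : ι => ℝ) i).hasFDerivAt.pow 2

lemma sum_sq_pos {ι : Type*} [Fintype ι] {x : ι → ℝ} (hx : x ≠ 0) : 0 < ∑ i, x i ^ 2 := by
  obtain ⟨i, hi⟩ := Function.ne_iff.mp hx
  exact Finset.sum_pos' (fun j _ => sq_nonneg (x j)) ⟨i, Finset.mem_univ i, sq_pos_of_ne_zero hi⟩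

lemma enorm3_pos {x : Fin 3 → ℝ} (hx : x ≠ 0) : 0 < enorm3 x :=
  Real.sqrt_pos.mpr (sum_sq_pos hx)

lemma hasFDerivAt_enorm3 {x : Fin 3 → ℝ} (hx : x ≠ 0) :
    HasFDerivAt enorm3
      ((1 / (2 * enorm3 x)) • ∑ i, (2 * x i) • (ContinuousLinearMap.proj i : (Fin 3 → ℝ) →L[ℝ] ℝ))
      x :=
  (Real.hasDerivAt_sqrt (sum_sq_pos hx).ne').comp_hasFDerivAt x (hasFDerivAt_sum_sq x)

lemma pd_comp_enorm3 {g : ℝ → ℝ} {x : Fin 3 → ℝ} (hg : DifferentiableAt ℝ g (enorm3 x))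
    (hx : x ≠ 0) (i : Fin 3) :
    pd i (g ∘ enorm3) x = deriv g (enorm3 x) * (x i / enorm3 x) := by
  rw [pd, (hg.hasDerivAt.comp_hasFDerivAt x (hasFDerivAt_enorm3 hx)).fderiv]
  have := (enorm3_pos hx).ne'
  simp only [smul_apply, sum_apply, ContinuousLinearMap.proj_apply, Pi.single_apply, smul_eq_mul,
    mul_ite, mul_one, mul_zero, Finset.sum_ite_eq', Finset.mem_univ, if_true]
  field_simp

lemma pd_alcShift {vs : ℝ} {f : ℝ → ℝ} {x : Fin 3 → ℝ} (hf : DifferentiableAt ℝ f (enorm3 x))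
    (hx : x ≠ 0) (i j : Fin 3) :
    pd i (alcShift vs f j) x
      = vs * deriv f (enorm3 x) * (x i / enorm3 x) * (if j = 0 then 1 else 0) := by
  have hV : alcShift vs f j = (fun r => vs * f r * (if j = 0 then 1 else 0)) ∘ enorm3 := rfl
  rw [hV, pd_comp_enorm3 ((hf.const_mul vs).mul_const _) hx, deriv_mul_const (hf.const_mul vs),
    deriv_const_mul vs hf]
  ring

def symmProd {ι : Type*} (u v : ι → ℝ) (i j : ι) : ℝ := u i * v j + u j * v i

lemma trace_symmProd {ι : Type*} [Fintype ι] (u v : ι → ℝ) :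
    ∑ i, symmProd u v i i = 2 * ∑ i, u i * v i := by
  simp only [symmProd, Finset.mul_sum]
  exact Finset.sum_congr rfl fun i _ => by ring

lemma II3_symmProd (u v : Fin 3 → ℝ) :
    II3 (symmProd u v) = (∑ i, u i * v i) ^ 2 - (∑ i, u i ^ 2) * ∑ i, v i ^ 2 := by
  simp only [II3, symmProd, Fin.sum_univ_three]
  ring

lemma Kmat_alcShift {vs : ℝ} {f : ℝ → ℝ} {x : Fin 3 → ℝ} (hf : DifferentiableAt ℝ f (enorm3 x))
    (hx : x ≠ 0) :
    Kmat (alcShift vs f) x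
      = symmProd (fun i => -(vs * deriv f (enorm3 x)) / 2 * (x i / enorm3 x)) (Pi.single 0 1) := by
  ext i j
  simp only [Kmat, pd_alcShift hf hx, symmProd, Pi.single_apply]
  ring

/-- For the Alcubierre warp drive with differentiable form function `f`, at every
`x ≠ 0`: `tr K = -(x₁/|x|) v_s f'(|x|)` and
`II[K] = -((x₂² + x₃²)/(4|x|²)) v_s² f'(|x|)² ≤ 0`; hence the Eulerian energy density
`E = II[K]/(8πG)` is everywhere nonpositive, independently of the bubble speed `v_s`. -/
theorem alcubierre_energy_nonpositive
    (G vs : ℝ) (hG : 0 < G) (f : ℝ → ℝ) (hf : Differentiable ℝ f)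
    (x : Fin 3 → ℝ) (hx : x ≠ 0) :
    (∑ i, Kmat (alcShift vs f) x i i)
      = -(x 0 / enorm3 x) * vs * deriv f (enorm3 x) ∧
    II3 (Kmat (alcShift vs f) x)
      = -(((x 1) ^ 2 + (x 2) ^ 2) / (4 * (enorm3 x) ^ 2)) * vs ^ 2
          * (deriv f (enorm3 x)) ^ 2 ∧
    II3 (Kmat (alcShift vs f) x) ≤ 0 ∧
    II3 (Kmat (alcShift vs f) x) / (8 * Real.pi * G) ≤ 0 := by
  have hK := Kmat_alcShift (vs := vs) hf.differentiableAt hx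
  have hr := (enorm3_pos hx).ne'
  have hII : II3 (Kmat (alcShift vs f) x)
      = -(((x 1) ^ 2 + (x 2) ^ 2) / (4 * (enorm3 x) ^ 2)) * vs ^ 2
          * (deriv f (enorm3 x)) ^ 2 := by
    rw [hK, II3_symmProd]
    simp only [Fin.sum_univ_three, Pi.single_apply, Fin.reduceEq, if_true, if_false]
    field_simp
    ring
  have hII_nonpos : II3 (Kmat (alcShift vs f) x) ≤ 0 := by
    rw [hII, neg_mul, neg_mul, neg_nonpos]
    positivity
  refine ⟨?_, hII, hII_nonpos, div_nonpos_of_nonpos_of_nonneg hII_nonpos (by positivity)⟩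
  rw [hK, trace_symmProd]
  simp only [Fin.sum_univ_three, Pi.single_apply, Fin.reduceEq, if_true, if_false]
  ring
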